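/- Let D be an integral domain with quotient field K, ⋆ a semistar operation on D, T an overring of D, ⋆' a semistar operation on T, and ℓ = ℓ_{⋆,T}. Then T is (⋆,⋆')-linked to D if and only if ℓ ≤ ⋆'_f, i.e. E^{ℓ} ⊆ E^{⋆'_f} for every nonzero T-submodule E of K. -/
import Mathlib


open Pointwise

/-! Basic framework for semistar operations on an integral domain `D`
with quotient field `K`. Submodules of `K` play the role of the
`D`-submodules of the quotient field. -/

section Generic

variable (R : Type*) (K : Type*) [CommRing R] [Field K] [Algebra R K]

/-- A semistar operation on `R` (with ambient field `K`): a map on the nonzero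
`R`-submodules of `K` satisfying (⋆₁), (⋆₂), (⋆₃). The map is total on
`Submodule R K`, but the axioms are only imposed on nonzero submodules. -/
structure SemistarOp where
  toFun : Submodule R K → Submodule R K
  smul' : ∀ x : K, x ≠ 0 → ∀ E : Submodule R K, E ≠ ⊥ → toFun (x • E) = x • toFun E
  mono' : ∀ E F : Submodule R K, E ≠ ⊥ → F ≠ ⊥ → E ≤ F → toFun E ≤ toFun F
  le_star' : ∀ E : Submodule R K, E ≠ ⊥ → E ≤ toFun E
  idem' : ∀ E : Submodule R K, E ≠ ⊥ → toFun (toFun E) = toFun E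

variable {R K}

/-- The `R`-submodule of `K` generated by (the image of) an ideal of `R`. -/
def idealSub (I : Ideal R) : Submodule R K := Submodule.map (Algebra.linearMap R K) I

/-- The finite-type operation `⋆_f` associated to (the function underlying) a semistar
operation: `E^{⋆_f} = ∪ { F^⋆ : F nonzero finitely generated, F ⊆ E }`. -/
def starF (f : Submodule R K → Submodule R K) (E : Submodule R K) : Submodule R K :=
  sSup {G | ∃ F : Submodule R K, F.FG ∧ F ≠ ⊥ ∧ F ≤ E ∧ G = f F}

/-- `I` is a quasi-⋆-ideal: `I ≠ 0` and `I^⋆ ∩ R = I`. -/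
def QuasiIdeal (f : Submodule R K → Submodule R K) (I : Ideal R) : Prop :=
  I ≠ ⊥ ∧ Submodule.comap (Algebra.linearMap R K) (f (idealSub I)) = I

/-- `I` is a quasi-⋆-prime: a prime quasi-⋆-ideal. -/
def QuasiPrime (f : Submodule R K → Submodule R K) (I : Ideal R) : Prop :=
  QuasiIdeal f I ∧ I.IsPrime

/-- `I` is a quasi-⋆-maximal: maximal among proper quasi-⋆-ideals. -/
def QuasiMax (f : Submodule R K → Submodule R K) (I : Ideal R) : Prop :=
  QuasiIdeal f I ∧ I ≠ ⊤ ∧ ∀ J : Ideal R, QuasiIdeal f J → J ≠ ⊤ → I ≤ J → I = J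

/-- The localization `E·R_Q` of a submodule `E` of `K` at (the complement of) `Q`:
for prime `Q` this is `{x ∈ K : s·x ∈ E for some s ∉ Q}`. -/
def locSub (Q : Ideal R) (E : Submodule R K) : Submodule R K :=
  Submodule.span R {x : K | ∃ s : R, s ∉ Q ∧ algebraMap R K s * x ∈ E}

/-- The spectral semistar operation `⋆̃` associated to `⋆`:
`E^{⋆̃} = ∩ { E R_Q : Q quasi-⋆_f-maximal }` (equal to `K` if there are none). -/
def tildeOp (f : Submodule R K → Submodule R K) (E : Submodule R K) : Submodule R K :=
  ⨅ (Q : Ideal R) (_ : QuasiMax (starF f) Q), locSub Q E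

/-- The `v`-operation `E ↦ (R :_K (R :_K E))`. -/
def vOp (E : Submodule R K) : Submodule R K := 1 / (1 / E)

/-- The `t`-operation: the finite-type operation associated to `v`. -/
def tOp : Submodule R K → Submodule R K := starF (vOp (R := R) (K := K))

/-- `R` is a Prüfer ⋆-multiplication domain: every nonzero finitely generated ideal `F`
is ⋆_f-invertible, i.e. `(F·(R :_K F))^{⋆_f} = R^⋆`. -/
def PSMD (f : Submodule R K → Submodule R K) : Prop :=
  ∀ F : Ideal R, F ≠ ⊥ → F.FG →
    starF f (idealSub F * ((1 : Submodule R K) / idealSub F)) = f 1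

/-- The content ideal of a polynomial: the ideal generated by its coefficients. -/
def contentI (h : Polynomial R) : Ideal R := Ideal.span (Set.range h.coeff)

/-- The Nagata ring `Na(R,⋆) = R[X]_{N(⋆)}`, realized as the subset
`{g/h : g, h ∈ R[X], h ≠ 0, c(h)^⋆ = R^⋆}` of the field `K(X)` of rational functions. -/
def NaSet (f : Submodule R K → Submodule R K) : Set (RatFunc K) :=
  {x | ∃ g h : Polynomial R, h ≠ 0 ∧ f (idealSub (contentI h)) = f 1 ∧
    x * algebraMap (Polynomial K) (RatFunc K) (h.map (algebraMap R K)) =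
      algebraMap (Polynomial K) (RatFunc K) (g.map (algebraMap R K))}

/-- The Nagata ring as a subring of `K(X)` (the set `NaSet` is multiplicatively
saturated, so it coincides with the subring it generates). -/
noncomputable def NaSub (f : Submodule R K → Submodule R K) : Subring (RatFunc K) :=
  Subring.closure (NaSet f)

/-- A subset `S` of `K` is integrally closed (in `K`) if every element of `K` which is a root
of a monic polynomial with coefficients in `S` lies in `S`. -/
def IntClosedSet (S : Set K) : Prop :=
  ∀ x : K, (∃ p : Polynomial K, p.Monic ∧ (∀ n, p.coeff n ∈ S) ∧ p.eval x = 0) → x ∈ S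

/-- A subset `S` of `K` is seminormal if `x² ∈ S` and `x³ ∈ S` imply `x ∈ S`. -/
def SeminormalSet (S : Set K) : Prop := ∀ x : K, x ^ 2 ∈ S → x ^ 3 ∈ S → x ∈ S

/-- `T` is `(f,g)`-linked to `T` (case `D = T` of linkedness). -/
def LinkedSelf (f g : Submodule R K → Submodule R K) : Prop :=
  ∀ G : Ideal R, G ≠ ⊥ → G.FG → f (idealSub G) = f 1 → g (idealSub G) = g 1

end Generic

section Overring

variable {D : Type*} {K : Type*} [CommRing D] [Field K] [Algebra D K]

/-- The `T`-submodule `E·T` of `K` generated by a `D`-submodule `E` of `K`. -/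
def extT (T : Subalgebra D K) (E : Submodule D K) : Submodule ↥T K :=
  Submodule.span ↥T (E : Set K)

/-- `T` is `(⋆,⋆')`-linked to `D`: for every nonzero finitely generated integral ideal `F`
of `D`, `F^⋆ = D^⋆` implies `(FT)^{⋆'} = T^{⋆'}`. -/
def LinkedF (f : Submodule D K → Submodule D K) (T : Subalgebra D K)
    (g : Submodule ↥T K → Submodule ↥T K) : Prop :=
  ∀ F : Ideal D, F ≠ ⊥ → F.FG → f (idealSub F) = f 1 → g (extT T (idealSub F)) = g 1

/-- `T` is `t`-linked to `(D,⋆)`: `T` is `(⋆, t_T)`-linked to `D`. -/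
def TLinked (f : Submodule D K → Submodule D K) (T : Subalgebra D K) : Prop :=
  LinkedF f T (tOp (R := ↥T) (K := K))

/-- The semistar operation `ℓ_{⋆,T}` on `T`:
`E^ℓ = ∩ { E T_{D∖P} : P quasi-⋆_f-prime of D }` (equal to `K` if there are none). -/
def ellOp (f : Submodule D K → Submodule D K) (T : Subalgebra D K)
    (E : Submodule ↥T K) : Submodule ↥T K :=
  ⨅ (P : Ideal D) (_ : QuasiPrime (starF f) P),
    Submodule.span ↥T {x : K | ∃ r : D, r ∉ P ∧ algebraMap D K r * x ∈ E}

/-- The localization `D_P` of `D` at a prime `P`, as a subalgebra of `K`. -/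
def Dloc (P : Ideal D) : Subalgebra D K :=
  Algebra.adjoin D {x : K | ∃ r : D, r ∉ P ∧ algebraMap D K r * x ∈ (⊥ : Subalgebra D K)}

/-- The localization `T_{D∖P}` of an overring `T` at the multiplicative set `D∖P`,
as a subalgebra of `K`. -/
def TlocD (T : Subalgebra D K) (P : Ideal D) : Subalgebra D K :=
  Algebra.adjoin D {x : K | ∃ r : D, r ∉ P ∧ algebraMap D K r * x ∈ T}

/-- The localization `T_Q` of an overring `T` at a prime `Q` of `T`,
as a subalgebra of `K`. -/
def TlocQ (T : Subalgebra D K) (Q : Ideal ↥T) : Subalgebra D K :=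
  Algebra.adjoin D {x : K | ∃ t : ↥T, t ∉ Q ∧ (t : K) * x ∈ T}

/-- `T` is `(⋆,⋆')`-flat over `D`: `T` is `(⋆,⋆')`-linked to `D` and `D_{Q∩D} = T_Q`
for every quasi-⋆'_f-prime `Q` of `T`. -/
def FlatF (f : Submodule D K → Submodule D K) (T : Subalgebra D K)
    (g : Submodule ↥T K → Submodule ↥T K) : Prop :=
  LinkedF f T g ∧
    ∀ Q : Ideal ↥T, QuasiPrime (starF g) Q →
      Dloc (Q.comap (algebraMap D ↥T)) = TlocQ T Q

/-- `B` is a flat `A`-module (for subalgebras `A ⊆ B` of `K`, with the module structure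
coming from the inclusion). -/
def FlatPair (A B : Subalgebra D K) : Prop :=
  ∃ h : A ≤ B, @Module.Flat ↥A ↥B _ _ ((Subalgebra.inclusion h).toRingHom.toModule)

/-- `B` is a flat `A`-module, for subrings `A ⊆ B` of a commutative ring. -/
def FlatSubring {L : Type*} [CommRing L] (A B : Subring L) : Prop :=
  ∃ h : A ≤ B, @Module.Flat ↥A ↥B _ _ ((Subring.inclusion h).toModule)

end Overring

section Aux
variable {R K : Type*} [CommRing R] [Field K] [Algebra R K]

lemma one_ne_bot' : (1 : Submodule R K) ≠ ⊥ := by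
  intro h
  have h1 : (1 : K) ∈ (1 : Submodule R K) := Submodule.one_le.mp le_rfl
  rw [h, Submodule.mem_bot] at h1
  exact one_ne_zero h1

lemma span_singleton_ne_bot {y : K} (hy : y ≠ 0) : Submodule.span R {y} ≠ ⊥ := by
  simpa [Submodule.span_singleton_eq_bot] using hy

lemma starF_mono (f : Submodule R K → Submodule R K) {E E' : Submodule R K} (h : E ≤ E') :
    starF f E ≤ starF f E' := by
  apply sSup_le_sSup
  rintro G ⟨F, h1, h2, h3, h4⟩
  exact ⟨F, h1, h2, h3.trans h, h4⟩

lemma le_starF (s : SemistarOp R K) (E : Submodule R K) : E ≤ starF s.toFun E := by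
  intro x hx
  rcases eq_or_ne x 0 with rfl | hx0
  · exact zero_mem _
  · have hsp : Submodule.span R {x} ≠ ⊥ := span_singleton_ne_bot hx0
    have : x ∈ s.toFun (Submodule.span R {x}) :=
      s.le_star' _ hsp (Submodule.mem_span_singleton_self x)
    have hmem : s.toFun (Submodule.span R {x}) ∈
        {G | ∃ F : Submodule R K, F.FG ∧ F ≠ ⊥ ∧ F ≤ E ∧ G = s.toFun F} :=
      ⟨Submodule.span R {x}, Submodule.fg_span_singleton x, hsp,
        by simpa [Submodule.span_le] using hx, rfl⟩
    exact le_sSup hmem this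

lemma starF_ne_bot (s : SemistarOp R K) {E : Submodule R K} (hE : E ≠ ⊥) :
    starF s.toFun E ≠ ⊥ := fun h => hE (le_bot_iff.mp (h ▸ le_starF s E))

lemma starF_set_directed (s : SemistarOp R K) (E : Submodule R K) :
    DirectedOn (· ≤ ·) {G | ∃ F : Submodule R K, F.FG ∧ F ≠ ⊥ ∧ F ≤ E ∧ G = s.toFun F} := by
  rintro G₁ ⟨F₁, hfg1, hb1, hle1, rfl⟩ G₂ ⟨F₂, hfg2, hb2, hle2, rfl⟩
  have hb : F₁ ⊔ F₂ ≠ ⊥ := fun h => hb1 (le_bot_iff.mp (h ▸ le_sup_left))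
  exact ⟨s.toFun (F₁ ⊔ F₂), ⟨F₁ ⊔ F₂, hfg1.sup hfg2, hb, sup_le hle1 hle2, rfl⟩,
    s.mono' _ _ hb1 hb le_sup_left, s.mono' _ _ hb2 hb le_sup_right⟩

lemma starF_set_nonempty (s : SemistarOp R K) {E : Submodule R K} (hE : E ≠ ⊥) :
    {G | ∃ F : Submodule R K, F.FG ∧ F ≠ ⊥ ∧ F ≤ E ∧ G = s.toFun F}.Nonempty := by
  obtain ⟨y, hy, hy0⟩ := (Submodule.ne_bot_iff E).mp hE
  exact ⟨s.toFun (Submodule.span R {y}), Submodule.span R {y}, Submodule.fg_span_singleton y,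
    span_singleton_ne_bot hy0, by simpa [Submodule.span_le] using hy, rfl⟩

lemma mem_starF (s : SemistarOp R K) {E : Submodule R K} (hE : E ≠ ⊥) {x : K} :
    x ∈ starF s.toFun E ↔ ∃ F : Submodule R K, F.FG ∧ F ≠ ⊥ ∧ F ≤ E ∧ x ∈ s.toFun F := by
  rw [starF, Submodule.mem_sSup_of_directed (starF_set_nonempty s hE) (starF_set_directed s E)]
  constructor
  · rintro ⟨G, ⟨F, h1, h2, h3, rfl⟩, hx⟩
    exact ⟨F, h1, h2, h3, hx⟩
  · rintro ⟨F, h1, h2, h3, hx⟩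
    exact ⟨s.toFun F, ⟨F, h1, h2, h3, rfl⟩, hx⟩

lemma starF_le (s : SemistarOp R K) {E : Submodule R K} (hE : E ≠ ⊥) :
    starF s.toFun E ≤ s.toFun E := by
  apply sSup_le
  rintro G ⟨F, h1, h2, h3, rfl⟩
  exact s.mono' _ _ h2 hE h3

lemma fg_le_starF (s : SemistarOp R K) {F E : Submodule R K} (hF : F.FG) (hE : E ≠ ⊥)
    (h : F ≤ starF s.toFun E) :
    ∃ F₀ : Submodule R K, F₀.FG ∧ F₀ ≠ ⊥ ∧ F₀ ≤ E ∧ F ≤ s.toFun F₀ := by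
  have hcompact := (Submodule.fg_iff_compact F).mp hF
  obtain ⟨G, ⟨F₀, h1, h2, h3, rfl⟩, hFG⟩ :=
    ((CompleteLattice.isCompactElement_iff_le_of_directed_sSup_le _ F).mp hcompact) _
      (starF_set_nonempty s hE) (starF_set_directed s E) h
  exact ⟨F₀, h1, h2, h3, hFG⟩

lemma star_ne_bot (s : SemistarOp R K) {E : Submodule R K} (hE : E ≠ ⊥) : s.toFun E ≠ ⊥ :=
  fun h => hE (le_bot_iff.mp (h ▸ s.le_star' _ hE))

lemma starF_idem (s : SemistarOp R K) {E : Submodule R K} (hE : E ≠ ⊥) :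
    starF s.toFun (starF s.toFun E) = starF s.toFun E := by
  refine le_antisymm ?_ (le_starF s _)
  intro x hx
  obtain ⟨F, hfg, hb, hle, hx⟩ := (mem_starF s (starF_ne_bot s hE)).mp hx
  obtain ⟨F₀, hfg0, hb0, hle0, hFF₀⟩ := fg_le_starF s hfg hE hle
  have : x ∈ s.toFun F₀ := by
    have h2 := s.mono' F (s.toFun F₀) hb (star_ne_bot s hb0) hFF₀
    rw [s.idem' _ hb0] at h2
    exact h2 hx
  exact (mem_starF s hE).mpr ⟨F₀, hfg0, hb0, hle0, this⟩

end Aux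
section Aux2
variable {R K : Type*} [CommRing R] [Field K] [Algebra R K]

lemma smul_ne_bot' {x : K} (hx : x ≠ 0) {E : Submodule R K} (hE : E ≠ ⊥) : x • E ≠ ⊥ := by
  obtain ⟨y, hy, hy0⟩ := (Submodule.ne_bot_iff E).mp hE
  rw [Submodule.ne_bot_iff]
  exact ⟨x • y, Submodule.smul_mem_pointwise_smul y x E hy, by
    simpa [smul_eq_mul] using mul_ne_zero hx hy0⟩

lemma mul_ne_bot' {E G : Submodule R K} (hE : E ≠ ⊥) (hG : G ≠ ⊥) : E * G ≠ ⊥ := by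
  obtain ⟨y, hy, hy0⟩ := (Submodule.ne_bot_iff E).mp hE
  obtain ⟨z, hz, hz0⟩ := (Submodule.ne_bot_iff G).mp hG
  rw [Submodule.ne_bot_iff]
  exact ⟨y * z, Submodule.mul_mem_mul hy hz, mul_ne_zero hy0 hz0⟩

lemma smul_le_mul' {n : K} {E G : Submodule R K} (hn : n ∈ G) : n • E ≤ G * E := by
  rintro _ ⟨y, hy, rfl⟩
  exact Submodule.mul_mem_mul hn hy

lemma star_mul_le (s : SemistarOp R K) {E G : Submodule R K} (hE : E ≠ ⊥) (hG : G ≠ ⊥) :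
    s.toFun E * G ≤ s.toFun (E * G) := by
  rw [Submodule.mul_le]
  intro m hm n hn
  rcases eq_or_ne n 0 with rfl | hn0
  · simpa using zero_mem _
  · have h1 : n • m ∈ n • s.toFun E := Submodule.smul_mem_pointwise_smul m n _ hm
    rw [← s.smul' n hn0 E hE] at h1
    have h2 : s.toFun (n • E) ≤ s.toFun (E * G) := by
      apply s.mono' _ _ (smul_ne_bot' hn0 hE) (mul_ne_bot' hE hG)
      rw [mul_comm E G]
      exact smul_le_mul' hn
    have h4 := h2 h1
    rw [smul_eq_mul, mul_comm n m] at h4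
    exact h4

lemma star_mul_star_le (s : SemistarOp R K) {E G : Submodule R K} (hE : E ≠ ⊥) (hG : G ≠ ⊥) :
    s.toFun E * s.toFun G ≤ s.toFun (E * G) := by
  have h1 : s.toFun E * s.toFun G ≤ s.toFun (E * s.toFun G) :=
    star_mul_le s hE (star_ne_bot s hG)
  have h2 : E * s.toFun G ≤ s.toFun (E * G) := by
    rw [mul_comm E (s.toFun G), mul_comm E G]
    exact star_mul_le s hG hE
  refine h1.trans ?_
  have h3 := s.mono' _ _ (mul_ne_bot' hE (star_ne_bot s hG)) (star_ne_bot s (mul_ne_bot' hE hG)) h2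
  rwa [s.idem' _ (mul_ne_bot' hE hG)] at h3

lemma starF_mul_starF_le (s : SemistarOp R K) {A B : Submodule R K} (hA : A ≠ ⊥) (hB : B ≠ ⊥) :
    starF s.toFun A * starF s.toFun B ≤ starF s.toFun (A * B) := by
  rw [Submodule.mul_le]
  intro m hm n hn
  obtain ⟨F₁, hfg1, hb1, hle1, hm⟩ := (mem_starF s hA).mp hm
  obtain ⟨F₂, hfg2, hb2, hle2, hn⟩ := (mem_starF s hB).mp hn
  have h1 : m * n ∈ s.toFun (F₁ * F₂) :=
    star_mul_star_le s hb1 hb2 (Submodule.mul_mem_mul hm hn)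
  exact (mem_starF s (mul_ne_bot' hA hB)).mpr
    ⟨F₁ * F₂, hfg1.mul hfg2, mul_ne_bot' hb1 hb2, mul_le_mul' hle1 hle2, h1⟩

lemma star_eq_one (s : SemistarOp R K) {E : Submodule R K} (hE : E ≠ ⊥) (hle : E ≤ 1)
    (h1 : (1 : K) ∈ s.toFun E) : s.toFun E = s.toFun 1 := by
  refine le_antisymm (s.mono' _ _ hE one_ne_bot' hle) ?_
  have hone : (1 : Submodule R K) ≤ s.toFun E := by
    rw [Submodule.one_eq_span, Submodule.span_le]
    simpa using h1
  have := s.mono' _ _ one_ne_bot' (star_ne_bot s hE) hone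
  rwa [s.idem' _ hE] at this

end Aux2
section Aux2b
variable {R K : Type*} [CommRing R] [Field K] [Algebra R K]

lemma mem_smul_submodule {x y : K} {G : Submodule R K} :
    y ∈ x • G ↔ ∃ z ∈ G, x • z = y := by
  rw [← SetLike.mem_coe, Submodule.coe_pointwise_smul]
  exact Set.mem_smul_set

lemma fg_smul {x : K} {G : Submodule R K} (h : G.FG) : (x • G).FG := by
  obtain ⟨S, hS⟩ := h
  rw [← hS, Submodule.smul_span]
  exact Submodule.fg_span (S.finite_toSet.smul_set)

lemma span_singleton_eq_smul_one (x : K) :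
    Submodule.span R {x} = x • (1 : Submodule R K) := by
  rw [Submodule.one_eq_span, Submodule.smul_span, Set.smul_set_singleton, smul_eq_mul, mul_one]

end Aux2b
section Aux3
variable {R K : Type*} [CommRing R] [Field K] [Algebra R K]

lemma mem_idealSub {I : Ideal R} {x : K} :
    x ∈ (idealSub I : Submodule R K) ↔ ∃ a ∈ I, algebraMap R K a = x := by
  simp [idealSub, Submodule.mem_map]

lemma idealSub_ne_bot (hinj : Function.Injective (algebraMap R K)) {I : Ideal R} (hI : I ≠ ⊥) :
    (idealSub I : Submodule R K) ≠ ⊥ := by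
  obtain ⟨a, ha, ha0⟩ := (Submodule.ne_bot_iff I).mp hI
  rw [Submodule.ne_bot_iff]
  refine ⟨algebraMap R K a, mem_idealSub.mpr ⟨a, ha, rfl⟩, fun h => ha0 (hinj ?_)⟩
  rw [h, map_zero]

lemma idealSub_mono {I J : Ideal R} (h : I ≤ J) :
    (idealSub I : Submodule R K) ≤ idealSub J := Submodule.map_mono h

lemma idealSub_mul_le {A B : Ideal R} :
    (idealSub A : Submodule R K) * idealSub B ≤ idealSub (A * B) := by
  rw [Submodule.mul_le]
  intro m hm n hn
  obtain ⟨a, ha, rfl⟩ := mem_idealSub.mp hm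
  obtain ⟨b, hb, rfl⟩ := mem_idealSub.mp hn
  exact mem_idealSub.mpr ⟨a * b, Ideal.mul_mem_mul ha hb, map_mul _ _ _⟩

lemma le_quasi_closure (s : SemistarOp R K) (I : Ideal R) :
    I ≤ Submodule.comap (Algebra.linearMap R K) (starF s.toFun (idealSub I)) := by
  intro a ha
  exact le_starF s _ (mem_idealSub.mpr ⟨a, ha, rfl⟩)

lemma quasi_closure (s : SemistarOp R K) (hinj : Function.Injective (algebraMap R K))
    {I : Ideal R} (hI : I ≠ ⊥) :
    QuasiIdeal (starF s.toFun)
      (Submodule.comap (Algebra.linearMap R K) (starF s.toFun (idealSub I))) := by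
  set Iq := Submodule.comap (Algebra.linearMap R K) (starF s.toFun (idealSub I)) with hIq
  have hIleIq : I ≤ Iq := le_quasi_closure s I
  have hIqb : Iq ≠ ⊥ := fun h => hI (le_bot_iff.mp (h ▸ hIleIq))
  refine ⟨hIqb, le_antisymm ?_ (le_quasi_closure s Iq)⟩
  have h1 : (idealSub Iq : Submodule R K) ≤ starF s.toFun (idealSub I) := by
    rw [idealSub, Submodule.map_le_iff_le_comap]
  have h2 : starF s.toFun (idealSub Iq) ≤ starF s.toFun (idealSub I) := by
    have := starF_mono s.toFun h1
    rwa [starF_idem s (idealSub_ne_bot hinj hI)] at this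
  exact Submodule.comap_mono h2

lemma quasi_sSup_chain (s : SemistarOp R K) (hinj : Function.Injective (algebraMap R K))
    {c : Set (Ideal R)} (hc : c ⊆ {J | QuasiIdeal (starF s.toFun) J ∧ J ≠ ⊤})
    (hchain : IsChain (· ≤ ·) c) {y : Ideal R} (hy : y ∈ c) :
    QuasiIdeal (starF s.toFun) (sSup c) ∧ sSup c ≠ ⊤ := by
  have hyb : y ≠ ⊥ := (hc hy).1.1
  have hne : c.Nonempty := ⟨y, hy⟩
  have hdir : DirectedOn (· ≤ ·) c := hchain.directedOn
  have hsb : sSup c ≠ ⊥ := fun h => hyb (le_bot_iff.mp (h ▸ le_sSup hy))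
  refine ⟨⟨hsb, le_antisymm ?_ (le_quasi_closure s _)⟩, ?_⟩
  · intro r hr
    have hr' : algebraMap R K r ∈ starF s.toFun (idealSub (sSup c)) := hr
    have hmap : (idealSub (sSup c) : Submodule R K) = ⨆ J : c, idealSub (J : Ideal R) := by
      rw [idealSub, sSup_eq_iSup', Submodule.map_iSup]
      rfl
    obtain ⟨F, hfg, hFb, hFle, hrF⟩ :=
      (mem_starF s (idealSub_ne_bot hinj hsb)).mp hr'
    have hFle' : F ≤ sSup (Set.range fun J : c => (idealSub (J : Ideal R) : Submodule R K)) := by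
      rwa [sSup_range, ← hmap]
    have hdir2 : DirectedOn (· ≤ ·)
        (Set.range fun J : c => (idealSub (J : Ideal R) : Submodule R K)) := by
      rintro _ ⟨⟨J₁, hJ₁⟩, rfl⟩ _ ⟨⟨J₂, hJ₂⟩, rfl⟩
      rcases hchain.total hJ₁ hJ₂ with h | h
      · exact ⟨idealSub J₂, ⟨⟨J₂, hJ₂⟩, rfl⟩, idealSub_mono h, le_rfl⟩
      · exact ⟨idealSub J₁, ⟨⟨J₁, hJ₁⟩, rfl⟩, le_rfl, idealSub_mono h⟩
    obtain ⟨_, ⟨⟨J₀, hJ₀⟩, rfl⟩, hFJ₀⟩ :=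
      ((CompleteLattice.isCompactElement_iff_le_of_directed_sSup_le _ F).mp
        ((Submodule.fg_iff_compact F).mp hfg)) _
        (Set.range_nonempty (ι := c) _ (h := ⟨⟨y, hy⟩⟩)) hdir2 hFle'
    have hrJ₀ : algebraMap R K r ∈ starF s.toFun (idealSub J₀) := by
      have hmem : s.toFun F ∈
          {G | ∃ F' : Submodule R K, F'.FG ∧ F' ≠ ⊥ ∧ F' ≤ idealSub J₀ ∧ G = s.toFun F'} :=
        ⟨F, hfg, hFb, hFJ₀, rfl⟩
      exact le_sSup hmem hrF
    have : r ∈ J₀ := by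
      rw [← (hc hJ₀).1.2]
      exact hrJ₀
    exact (le_sSup hJ₀) this
  · intro htop
    have h1 : (1 : R) ∈ sSup c := htop ▸ Submodule.mem_top
    obtain ⟨J, hJ, h1J⟩ := (Submodule.mem_sSup_of_directed hne hdir).mp h1
    exact (hc hJ).2 (Ideal.eq_top_iff_one J |>.mpr h1J)

lemma exists_quasiPrime (s : SemistarOp R K) (hinj : Function.Injective (algebraMap R K))
    {I : Ideal R} (hq : QuasiIdeal (starF s.toFun) I) (hI : I ≠ ⊤) :
    ∃ P : Ideal R, QuasiPrime (starF s.toFun) P ∧ I ≤ P := by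
  set S : Set (Ideal R) := {J | QuasiIdeal (starF s.toFun) J ∧ J ≠ ⊤} with hS
  obtain ⟨m, hIm, hmax⟩ := zorn_le_nonempty₀ S
    (fun c hc hchain y hy => ⟨sSup c, quasi_sSup_chain s hinj hc hchain hy,
      fun z hz => le_sSup hz⟩) I ⟨hq, hI⟩
  have hmS : m ∈ S := hmax.prop
  have hmb : m ≠ ⊥ := hmS.1.1
  have hmtop : m ≠ ⊤ := hmS.2
  refine ⟨m, ⟨hmS.1, ?_⟩, hIm⟩
  constructor
  · exact hmtop
  · intro a b hab
    by_contra hcon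
    push_neg at hcon
    obtain ⟨ha, hb⟩ := hcon
    have key : ∀ x : R, x ∉ m →
        (1 : K) ∈ starF s.toFun (idealSub (m ⊔ Ideal.span {x})) := by
      intro x hx
      by_contra h1
      have hAb : m ⊔ Ideal.span {x} ≠ ⊥ := fun h => hmb (le_bot_iff.mp (h ▸ le_sup_left))
      have hAq := quasi_closure s hinj hAb
      set Aq := Submodule.comap (Algebra.linearMap R K)
        (starF s.toFun (idealSub (m ⊔ Ideal.span {x}))) with hAqdef
      have hAqtop : Aq ≠ ⊤ := by
        intro h
        apply h1
        have h2 : (1 : R) ∈ Aq := h ▸ Submodule.mem_top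
        rw [hAqdef] at h2
        simpa using h2
      have hmAq : m ≤ Aq := le_sup_left.trans (le_quasi_closure s _)
      have : Aq ≤ m := hmax.2 ⟨hAq, hAqtop⟩ hmAq
      exact hx (this ((le_sup_right.trans (le_quasi_closure s _))
        (Ideal.mem_span_singleton_self x)))
    have h1 := key a ha
    have h2 := key b hb
    have hAb : m ⊔ Ideal.span {a} ≠ ⊥ := fun h => hmb (le_bot_iff.mp (h ▸ le_sup_left))
    have hBb : m ⊔ Ideal.span {b} ≠ ⊥ := fun h => hmb (le_bot_iff.mp (h ▸ le_sup_left))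
    have hmul : (m ⊔ Ideal.span {a}) * (m ⊔ Ideal.span {b}) ≤ m := by
      rw [Ideal.mul_le]
      intro x hx y hy
      obtain ⟨u, hu, v, hv, rfl⟩ := Submodule.mem_sup.mp hx
      obtain ⟨u', hu', v', hv', rfl⟩ := Submodule.mem_sup.mp hy
      obtain ⟨cc, rfl⟩ := Ideal.mem_span_singleton'.mp hv
      obtain ⟨dd, rfl⟩ := Ideal.mem_span_singleton'.mp hv'
      have hexp : (u + cc * a) * (u' + dd * b) =
          u * (u' + dd * b) + (cc * a) * u' + (cc * dd) * (a * b) := by ring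
      rw [hexp]
      exact add_mem (add_mem (Ideal.mul_mem_right _ m hu) (Ideal.mul_mem_left m _ hu'))
        (Ideal.mul_mem_left m _ hab)
    have hmem1 : (1 : K) ∈ starF s.toFun (idealSub m) := by
      have := Submodule.mul_mem_mul h1 h2
      rw [one_mul] at this
      have h3 := starF_mul_starF_le s (idealSub_ne_bot hinj hAb) (idealSub_ne_bot hinj hBb) this
      have h4 := starF_mono s.toFun (idealSub_mul_le (A := m ⊔ Ideal.span {a})
        (B := m ⊔ Ideal.span {b}) (K := K)) h3
      exact starF_mono s.toFun (idealSub_mono hmul) h4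
    have : (1 : R) ∈ m := by
      rw [← hmS.1.2]
      simpa using hmem1
    exact hmtop (Ideal.eq_top_iff_one m |>.mpr this)

end Aux3
section Aux4
variable {D K : Type*} [CommRing D] [Field K] [Algebra D K]

lemma coe_smul_T {T : Subalgebra D K} (t : ↥T) (y : K) : t • y = (t : K) * y := rfl

lemma algebraMap_T_coe {T : Subalgebra D K} (a : D) :
    ((algebraMap D ↥T a : ↥T) : K) = algebraMap D K a := rfl

lemma injective_algebraMap_T (T : Subalgebra D K) :
    Function.Injective (algebraMap ↥T K) := fun a b h => Subtype.ext h

lemma idealSub_le_one {I : Ideal D} : (idealSub I : Submodule D K) ≤ 1 := by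
  intro y hy
  obtain ⟨a, _, rfl⟩ := mem_idealSub.mp hy
  rw [Submodule.one_eq_range]
  exact ⟨a, rfl⟩

lemma extT_idealSub_fg (T : Subalgebra D K) {F : Ideal D} (hF : F.FG) :
    (extT T (idealSub F)).FG := by
  obtain ⟨S, hS⟩ := hF
  have h1 : (idealSub F : Submodule D K) =
      Submodule.span D (algebraMap D K '' ↑S) := by
    rw [idealSub, ← hS, Ideal.span, Submodule.map_span]
    rfl
  rw [extT, h1, Submodule.span_span_of_tower]
  exact Submodule.fg_span ((S.finite_toSet).image _)

lemma extT_ne_bot (T : Subalgebra D K) {F : Ideal D} (hF : (idealSub F : Submodule D K) ≠ ⊥) :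
    extT T (idealSub F) ≠ ⊥ := by
  obtain ⟨y, hy, hy0⟩ := (Submodule.ne_bot_iff _).mp hF
  rw [Submodule.ne_bot_iff]
  exact ⟨y, Submodule.subset_span hy, hy0⟩

lemma extT_le_one (T : Subalgebra D K) {F : Ideal D} :
    extT T (idealSub F) ≤ (1 : Submodule ↥T K) := by
  rw [extT, Submodule.span_le]
  intro y hy
  obtain ⟨a, _, rfl⟩ := mem_idealSub.mp hy
  rw [SetLike.mem_coe, Submodule.one_eq_range]
  exact ⟨algebraMap D ↥T a, rfl⟩

lemma extT_le_idealSub (T : Subalgebra D K) {F : Ideal D} {Q : Ideal ↥T}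
    (h : ∀ a ∈ F, algebraMap D ↥T a ∈ Q) :
    extT T (idealSub F) ≤ (idealSub Q : Submodule ↥T K) := by
  rw [extT, Submodule.span_le]
  intro y hy
  obtain ⟨a, ha, rfl⟩ := mem_idealSub.mp hy
  exact mem_idealSub.mpr ⟨algebraMap D ↥T a, h a ha, rfl⟩

lemma exists_denominator (T : Subalgebra D K) {P : Ideal D} (hP : P.IsPrime)
    {E : Submodule ↥T K} {x : K}
    (hx : x ∈ Submodule.span ↥T {y : K | ∃ r : D, r ∉ P ∧ algebraMap D K r * y ∈ E}) :
    ∃ r : D, r ∉ P ∧ algebraMap D K r * x ∈ E := by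
  induction hx using Submodule.span_induction with
  | mem y hy => exact hy
  | zero =>
      exact ⟨1, fun h => hP.ne_top ((Ideal.eq_top_iff_one _).mpr h), by simpa using zero_mem E⟩
  | add y z hy hz ihy ihz =>
      obtain ⟨r1, hr1, hy'⟩ := ihy
      obtain ⟨r2, hr2, hz'⟩ := ihz
      refine ⟨r1 * r2, fun h => ((hP.mem_or_mem h).elim hr1 hr2), ?_⟩
      have hexp : algebraMap D K (r1 * r2) * (y + z) =
          (algebraMap D ↥T r2) • (algebraMap D K r1 * y) +
          (algebraMap D ↥T r1) • (algebraMap D K r2 * z) := by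
        rw [coe_smul_T, coe_smul_T, algebraMap_T_coe, algebraMap_T_coe, map_mul]
        ring
      rw [hexp]
      exact add_mem (E.smul_mem _ hy') (E.smul_mem _ hz')
  | smul t y hy ihy =>
      obtain ⟨r, hr, hy'⟩ := ihy
      refine ⟨r, hr, ?_⟩
      have hexp : algebraMap D K r * (t • y) = t • (algebraMap D K r * y) := by
        rw [coe_smul_T, coe_smul_T]
        ring
      rw [hexp]
      exact E.smul_mem t hy'

end Aux4
set_option maxHeartbeats 2000000 in
/-- **Proposition 3.10 (7).** `T` is `(⋆,⋆')`-linked to `D` if and only if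
`ℓ_{⋆,T} ≤ ⋆'_f`. -/
theorem linked_iff_ellOp_le
    {D K : Type*} [CommRing D] [IsDomain D] [Field K] [Algebra D K] [IsFractionRing D K]
    (s : SemistarOp D K) (T : Subalgebra D K) (s' : SemistarOp ↥T K) :
    LinkedF s.toFun T s'.toFun ↔
      ∀ E : Submodule ↥T K, E ≠ ⊥ → ellOp s.toFun T E ≤ starF s'.toFun E := by
  have hinjD : Function.Injective (algebraMap D K) := IsFractionRing.injective D K
  have hinjT := injective_algebraMap_T T
  constructor
  · -- linked → ℓ ≤ ⋆'_f
    intro hlink E hE x hx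
    rcases eq_or_ne x 0 with rfl | hx0
    · exact zero_mem _
    simp only [ellOp, Submodule.mem_iInf] at hx
    by_cases hex : ∃ P : Ideal D, QuasiPrime (starF s.toFun) P
    · -- there is a quasi-⋆_f-prime of D
      obtain ⟨P₀, hP₀⟩ := hex
      by_contra hxE
      have hEfb : starF s'.toFun E ≠ ⊥ := starF_ne_bot s' hE
      set I : Ideal ↥T :=
        Submodule.comap (LinearMap.toSpanSingleton ↥T K x) (starF s'.toFun E) with hIdef
      have hmemI : ∀ t : ↥T, t ∈ I ↔ (t : K) * x ∈ starF s'.toFun E := by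
        intro t
        rw [hIdef, Submodule.mem_comap, LinearMap.toSpanSingleton_apply, coe_smul_T]
      have hIb : I ≠ ⊥ := by
        obtain ⟨r₀, hr₀, hr₀x⟩ := exists_denominator T hP₀.2 (hx P₀ hP₀)
        have hr₀0 : r₀ ≠ 0 := fun h => hr₀ (h ▸ P₀.zero_mem)
        rw [Submodule.ne_bot_iff]
        refine ⟨algebraMap D ↥T r₀, (hmemI _).mpr ?_, fun h => ?_⟩
        · rw [algebraMap_T_coe]
          exact le_starF s' E hr₀x
        · have h2 : algebraMap D K r₀ = algebraMap D K 0 := by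
            rw [map_zero, ← algebraMap_T_coe (T := T) r₀, h]
            rfl
          exact hr₀0 (hinjD h2)
      have hItop : I ≠ ⊤ := by
        intro h
        apply hxE
        have h1 : (1 : ↥T) ∈ I := h ▸ Submodule.mem_top
        have := (hmemI 1).mp h1
        simpa using this
      have hIquasi : QuasiIdeal (starF s'.toFun) I := by
        refine ⟨hIb, le_antisymm ?_ (le_quasi_closure s' I)⟩
        intro t ht
        have ht' : algebraMap ↥T K t ∈ starF s'.toFun (idealSub I) := ht
        obtain ⟨G, hGfg, hGb, hGle, htG⟩ := (mem_starF s' (idealSub_ne_bot hinjT hIb)).mp ht'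
        have hxG : x • G ≤ starF s'.toFun E := by
          intro y hy
          obtain ⟨z, hz, rfl⟩ := mem_smul_submodule.mp hy
          obtain ⟨u, hu, rfl⟩ := mem_idealSub.mp (hGle hz)
          rw [smul_eq_mul, mul_comm]
          exact (hmemI u).mp hu
        have hxt : x * algebraMap ↥T K t ∈ s'.toFun (x • G) := by
          rw [s'.smul' x hx0 G hGb]
          exact Submodule.smul_mem_pointwise_smul _ x _ htG
        have hmem2 : x * algebraMap ↥T K t ∈ starF s'.toFun (starF s'.toFun E) :=
          (mem_starF s' hEfb).mpr ⟨x • G, fg_smul hGfg, smul_ne_bot' hx0 hGb, hxG, hxt⟩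
        rw [starF_idem s' hE] at hmem2
        exact (hmemI t).mpr (by rwa [mul_comm] at hmem2)
      obtain ⟨Q, hQP, hIQ⟩ := exists_quasiPrime s' hinjT hIquasi hItop
      haveI hQprime : Q.IsPrime := hQP.2
      set P : Ideal D := Q.comap (algebraMap D ↥T) with hPdef
      have hPprime : P.IsPrime := Ideal.IsPrime.comap _
      have hPb : P ≠ ⊥ := by
        obtain ⟨q, hq, hq0⟩ := (Submodule.ne_bot_iff Q).mp hQP.1.1
        have hq0K : (q : K) ≠ 0 := fun h => hq0 (Subtype.ext h)
        obtain ⟨a, b, hbmem, hab⟩ := IsFractionRing.div_surjective (A := D) (q : K)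
        have hb0 : algebraMap D K b ≠ 0 :=
          IsFractionRing.to_map_ne_zero_of_mem_nonZeroDivisors hbmem
        have haK : algebraMap D K a = (q : K) * algebraMap D K b := by
          rw [div_eq_iff hb0] at hab
          exact hab
        have ha0 : a ≠ 0 := by
          intro h
          rw [h, map_zero] at haK
          exact mul_ne_zero hq0K hb0 haK.symm
        have haP : a ∈ P := by
          rw [hPdef, Ideal.mem_comap]
          have heq : algebraMap D ↥T a = q * algebraMap D ↥T b := by
            apply Subtype.ext
            rw [algebraMap_T_coe, haK]
            rfl
          rw [heq]
          exact Ideal.mul_mem_right _ Q hq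
        intro h
        rw [h, Submodule.mem_bot] at haP
        exact ha0 haP
      have hJtop : Submodule.comap (Algebra.linearMap D K) (starF s.toFun (idealSub P)) ≠ ⊤ := by
        intro htop
        have h1K : (1 : K) ∈ starF s.toFun (idealSub P) := by
          have h1 : (1 : D) ∈ Submodule.comap (Algebra.linearMap D K)
              (starF s.toFun (idealSub P)) := htop ▸ Submodule.mem_top
          simpa using h1
        obtain ⟨F, hFfg, hFb, hFle, h1F⟩ := (mem_starF s (idealSub_ne_bot hinjD hPb)).mp h1K
        set F₀ : Ideal D := Submodule.comap (Algebra.linearMap D K) F with hF₀def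
        have hmapF₀ : (idealSub F₀ : Submodule D K) = F := by
          rw [idealSub, hF₀def, Submodule.map_comap_eq]
          refine inf_eq_right.mpr (hFle.trans ?_)
          intro y hy
          obtain ⟨p, _, rfl⟩ := mem_idealSub.mp hy
          exact ⟨p, rfl⟩
        have hinjD' : Function.Injective ⇑(Algebra.linearMap D K) :=
          fun a b h => hinjD (by simpa using h)
        have hF₀fg : F₀.FG :=
          Submodule.fg_of_fg_map_injective _ hinjD'
            (show (idealSub F₀ : Submodule D K).FG by rw [hmapF₀]; exact hFfg)
        have hF₀b : F₀ ≠ ⊥ := by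
          intro h
          apply hFb
          rw [← hmapF₀, h, idealSub, Submodule.map_bot]
        have hF₀P : F₀ ≤ P := by
          intro a ha
          have haF : algebraMap D K a ∈ (idealSub P : Submodule D K) := hFle ha
          obtain ⟨p, hp, hpa⟩ := mem_idealSub.mp haF
          exact hinjD hpa ▸ hp
        have hstarF₀ : s.toFun (idealSub F₀) = s.toFun 1 := by
          refine star_eq_one s (by rw [hmapF₀]; exact hFb) idealSub_le_one ?_
          rw [hmapF₀]
          exact h1F
        have h1ext : (1 : K) ∈ s'.toFun (extT T (idealSub F₀)) := by
          rw [hlink F₀ hF₀b hF₀fg hstarF₀]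
          exact s'.le_star' 1 one_ne_bot' (Submodule.one_le.mp le_rfl)
        have hextle : extT T (idealSub F₀) ≤ (idealSub Q : Submodule ↥T K) :=
          extT_le_idealSub T (fun a ha => hF₀P ha)
        have h1Q : (1 : K) ∈ starF s'.toFun (idealSub Q) :=
          (mem_starF s' (idealSub_ne_bot hinjT hQP.1.1)).mpr
            ⟨extT T (idealSub F₀), extT_idealSub_fg T hF₀fg,
              extT_ne_bot T (by rw [hmapF₀]; exact hFb), hextle, h1ext⟩
        have h1Q' : (1 : ↥T) ∈ Q := by
          rw [← hQP.1.2]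
          simpa using h1Q
        exact hQprime.ne_top ((Ideal.eq_top_iff_one Q).mpr h1Q')
      obtain ⟨P', hP', hJP'⟩ := exists_quasiPrime s hinjD (quasi_closure s hinjD hPb) hJtop
      have hPP' : P ≤ P' := (le_quasi_closure s P).trans hJP'
      obtain ⟨r, hrP', hrx⟩ := exists_denominator T hP'.2 (hx P' hP')
      apply hrP'
      apply hPP'
      rw [hPdef, Ideal.mem_comap]
      apply hIQ
      refine (hmemI _).mpr ?_
      rw [algebraMap_T_coe]
      exact le_starF s' E hrx
    · -- no quasi-⋆_f-prime of D
      have hall : ∀ F : Ideal D, F ≠ ⊥ → F.FG → s.toFun (idealSub F) = s.toFun 1 := by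
        intro F hFb hFfg
        have hFq : Submodule.comap (Algebra.linearMap D K) (starF s.toFun (idealSub F)) = ⊤ := by
          by_contra hne
          obtain ⟨P, hP, _⟩ := exists_quasiPrime s hinjD (quasi_closure s hinjD hFb) hne
          exact hex ⟨P, hP⟩
        have h1K : (1 : K) ∈ starF s.toFun (idealSub F) := by
          have h1 : (1 : D) ∈ Submodule.comap (Algebra.linearMap D K)
              (starF s.toFun (idealSub F)) := hFq ▸ Submodule.mem_top
          simpa using h1
        exact star_eq_one s (idealSub_ne_bot hinjD hFb) idealSub_le_one
          (starF_le s (idealSub_ne_bot hinjD hFb) h1K)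
      have hs'1top : s'.toFun (1 : Submodule ↥T K) = ⊤ := by
        rw [eq_top_iff]
        intro z _
        obtain ⟨a, b, hbmem, hab⟩ := IsFractionRing.div_surjective (A := D) z
        have hb0 : algebraMap D K b ≠ 0 :=
          IsFractionRing.to_map_ne_zero_of_mem_nonZeroDivisors hbmem
        have hb0D : b ≠ 0 := fun h => hb0 (by rw [h, map_zero])
        have hbI : (Ideal.span {b} : Ideal D) ≠ ⊥ := by
          rwa [ne_eq, Ideal.span_singleton_eq_bot]
        have hbfg : (Ideal.span {b} : Ideal D).FG := ⟨{b}, by simp⟩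
        have hlb := hlink _ hbI hbfg (hall _ hbI hbfg)
        have hext : extT T (idealSub (Ideal.span {b})) =
            Submodule.span ↥T {algebraMap D K b} := by
          rw [extT, idealSub, Ideal.span, Submodule.map_span, Submodule.span_span_of_tower,
            Set.image_singleton]
          rfl
        rw [hext, span_singleton_eq_smul_one, s'.smul' _ hb0 _ one_ne_bot'] at hlb
        have hinv : (algebraMap D K b)⁻¹ ∈ s'.toFun (1 : Submodule ↥T K) := by
          have h1 : (1 : K) ∈ s'.toFun (1 : Submodule ↥T K) :=
            s'.le_star' 1 one_ne_bot' (Submodule.one_le.mp le_rfl)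
          rw [← hlb] at h1
          obtain ⟨w, hw, hw1⟩ := mem_smul_submodule.mp h1
          rw [smul_eq_mul] at hw1
          rwa [← eq_inv_of_mul_eq_one_left (mul_comm _ w ▸ hw1)]
        rw [← hab, div_eq_mul_inv]
        have hsm := Submodule.smul_mem _ (algebraMap D ↥T a) hinv
        rw [coe_smul_T, algebraMap_T_coe] at hsm
        exact hsm
      obtain ⟨e, he, he0⟩ := (Submodule.ne_bot_iff E).mp hE
      refine (mem_starF s' hE).mpr ⟨Submodule.span ↥T {e}, Submodule.fg_span_singleton e,
        span_singleton_ne_bot he0, by simpa [Submodule.span_le] using he, ?_⟩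
      rw [span_singleton_eq_smul_one, s'.smul' _ he0 _ one_ne_bot', hs'1top]
      exact mem_smul_submodule.mpr ⟨e⁻¹ * x, Submodule.mem_top,
        by rw [smul_eq_mul, ← mul_assoc, mul_inv_cancel₀ he0, one_mul]⟩
  · -- ℓ ≤ ⋆'_f → linked
    intro h F hFb hFfg hFstar
    set E : Submodule ↥T K := extT T (idealSub F) with hEdef
    have hEb : E ≠ ⊥ := extT_ne_bot T (idealSub_ne_bot hinjD hFb)
    have hx1 : (1 : K) ∈ ellOp s.toFun T E := by
      simp only [ellOp, Submodule.mem_iInf]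
      intro P hP
      have hFP : ¬ F ≤ P := by
        intro hFP
        have h1F : (1 : K) ∈ s.toFun (idealSub F) := by
          rw [hFstar]
          exact s.le_star' 1 one_ne_bot' (Submodule.one_le.mp le_rfl)
        have h1P : (1 : K) ∈ starF s.toFun (idealSub P) :=
          (mem_starF s (idealSub_ne_bot hinjD hP.1.1)).mpr
            ⟨idealSub F, Submodule.FG.map _ hFfg, idealSub_ne_bot hinjD hFb,
              idealSub_mono hFP, h1F⟩
        have h1P' : (1 : D) ∈ P := by
          rw [← hP.1.2]
          simpa using h1P
        exact hP.2.ne_top ((Ideal.eq_top_iff_one P).mpr h1P')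
      obtain ⟨r, hrF, hrP⟩ := SetLike.not_le_iff_exists.mp hFP
      apply Submodule.subset_span
      refine ⟨r, hrP, ?_⟩
      rw [mul_one]
      exact Submodule.subset_span (mem_idealSub.mpr ⟨r, hrF, rfl⟩)
    have hx2 : (1 : K) ∈ starF s'.toFun E := h E hEb hx1
    exact star_eq_one s' hEb (extT_le_one T) (starF_le s' hEb hx2)
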